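/- Let β > 0 and μ > 1. The convolution map (f,g) ↦ (2π)^{-1/2} f ∗ g is a continuous bilinear map from E_{(β,μ)} × E_{(β,μ)} to E_{(β,μ)}: there exists C > 0 such that ‖(2π)^{-1/2} f ∗ g‖_{(β,μ)} ≤ C ‖f‖_{(β,μ)} ‖g‖_{(β,μ)} for all f, g ∈ E_{(β,μ)}. -/

import Mathlib

open MeasureTheory Real Complex
open scoped Convolution

/-!
Write `w(m) = (1 + |m|)^μ e^{β|m|}`. Since `1 + |m| ≤ (1 + |m - t|) + (1 + |t|)`, convexity of
`x ↦ x^μ` and the triangle inequality in the exponent give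
`w(m) ≤ 2^{μ-1} ((1 + |t|)^{-μ} + (1 + |m - t|)^{-μ}) w(m - t) w(t)`.
Hence `w(m) |f(m - t) g(t)|` is dominated by `‖f‖ ‖g‖` times a sum of two translates of the
kernel `(1 + |t|)^{-μ}`, which is integrable exactly because `μ > 1`; integrating in `t` gives the
norm bound. Continuity holds because `f` is bounded and continuous while `g` is integrable.
-/

noncomputable def Eweight (β μ : ℝ) (h : ℝ → ℂ) (m : ℝ) : ℝ :=
  (1 + |m|) ^ μ * Real.exp (β * |m|) * ‖h m‖

def MemE (β μ : ℝ) (h : ℝ → ℂ) : Prop :=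
  Continuous h ∧ BddAbove (Set.range (Eweight β μ h))

noncomputable def Enorm (β μ : ℝ) (h : ℝ → ℂ) : ℝ :=
  ⨆ m : ℝ, Eweight β μ h m

noncomputable def polyExpWeight (β μ m : ℝ) : ℝ := (1 + |m|) ^ μ * Real.exp (β * |m|)

lemma Eweight_eq (β μ : ℝ) (h : ℝ → ℂ) (m : ℝ) :
    Eweight β μ h m = polyExpWeight β μ m * ‖h m‖ := rfl

lemma Eweight_const_mul (β μ : ℝ) (c : ℂ) (h : ℝ → ℂ) (m : ℝ) :
    Eweight β μ (fun x => c * h x) m = ‖c‖ * Eweight β μ h m := by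
  simp only [Eweight_eq, norm_mul]
  ring

lemma polyExpWeight_pos (β μ m : ℝ) : 0 < polyExpWeight β μ m := by
  unfold polyExpWeight
  positivity

lemma one_le_polyExpWeight {β μ : ℝ} (hβ : 0 ≤ β) (hμ : 0 ≤ μ) (m : ℝ) :
    1 ≤ polyExpWeight β μ m :=
  one_le_mul_of_one_le_of_one_le
    (Real.one_le_rpow (le_add_of_nonneg_right (abs_nonneg m)) hμ)
    (Real.one_le_exp (by positivity))

lemma one_add_abs_rpow_le {μ : ℝ} (hμ : 1 ≤ μ) (m t : ℝ) :
    (1 + |m|) ^ μ ≤ 2 ^ (μ - 1) * ((1 + |m - t|) ^ μ + (1 + |t|) ^ μ) := by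
  have htri : 1 + |m| ≤ (1 + |m - t|) + (1 + |t|) := by
    have := abs_add_le (m - t) t
    rw [sub_add_cancel] at this
    linarith
  have hconv := NNReal.rpow_add_le_mul_rpow_add_rpow
    ⟨1 + |m - t|, by positivity⟩ ⟨1 + |t|, by positivity⟩ hμ
  exact (Real.rpow_le_rpow (by positivity) htri (by linarith)).trans (mod_cast hconv)

lemma polyExpWeight_le {β μ : ℝ} (hβ : 0 ≤ β) (hμ : 1 ≤ μ) (m t : ℝ) :
    polyExpWeight β μ m ≤ 2 ^ (μ - 1) * ((1 + |t|) ^ (-μ) + (1 + |m - t|) ^ (-μ)) *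
      (polyExpWeight β μ (m - t) * polyExpWeight β μ t) := by
  have hexp : Real.exp (β * |m|) ≤ Real.exp (β * |m - t|) * Real.exp (β * |t|) := by
    rw [← Real.exp_add, ← mul_add, Real.exp_le_exp]
    refine mul_le_mul_of_nonneg_left ?_ hβ
    simpa using abs_add_le (m - t) t
  have hpoly : (1 + |m|) ^ μ ≤ 2 ^ (μ - 1) * ((1 + |t|) ^ (-μ) + (1 + |m - t|) ^ (-μ)) *
      ((1 + |m - t|) ^ μ * (1 + |t|) ^ μ) := by
    have ha : 0 < (1 + |m - t|) ^ μ := by positivity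
    have hb : 0 < (1 + |t|) ^ μ := by positivity
    rw [Real.rpow_neg (by positivity), Real.rpow_neg (by positivity)]
    convert one_add_abs_rpow_le hμ m t using 1
    field_simp
  calc polyExpWeight β μ m
      ≤ (2 ^ (μ - 1) * ((1 + |t|) ^ (-μ) + (1 + |m - t|) ^ (-μ)) *
          ((1 + |m - t|) ^ μ * (1 + |t|) ^ μ)) *
        (Real.exp (β * |m - t|) * Real.exp (β * |t|)) :=
        mul_le_mul hpoly hexp (by positivity) (by positivity)
    _ = _ := by
        unfold polyExpWeight
        ring

lemma integrable_one_add_abs_rpow_neg {μ : ℝ} (hμ : 1 < μ) :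
    Integrable fun t : ℝ => (1 + |t|) ^ (-μ) := by
  simpa using integrable_one_add_norm (E := ℝ) (μ := volume) (r := μ) (by simpa using hμ)

lemma integral_one_add_abs_rpow_neg_pos {μ : ℝ} (hμ : 1 < μ) :
    0 < ∫ t : ℝ, (1 + |t|) ^ (-μ) :=
  integral_pos_of_integrable_nonneg_nonzero (x := 0)
    ((by fun_prop : Continuous fun t : ℝ => 1 + |t|).rpow_const fun _ => Or.inl (by positivity))
    (integrable_one_add_abs_rpow_neg hμ) (fun t => by positivity) (by simp)

lemma memE_of_Eweight_le {β μ B : ℝ} {h : ℝ → ℂ} (hc : Continuous h)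
    (hB : ∀ m, Eweight β μ h m ≤ B) : MemE β μ h :=
  ⟨hc, B, by rintro _ ⟨m, rfl⟩; exact hB m⟩

lemma Enorm_le_of_Eweight_le {β μ B : ℝ} {h : ℝ → ℂ} (hB : ∀ m, Eweight β μ h m ≤ B) :
    Enorm β μ h ≤ B :=
  ciSup_le hB

lemma Enorm_nonneg (β μ : ℝ) (h : ℝ → ℂ) : 0 ≤ Enorm β μ h :=
  Real.iSup_nonneg fun m => by unfold Eweight; positivity

namespace MemE

variable {β μ : ℝ} {f g h : ℝ → ℂ}

lemma polyExpWeight_mul_norm_le (hh : MemE β μ h) (x : ℝ) :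
    polyExpWeight β μ x * ‖h x‖ ≤ Enorm β μ h :=
  le_ciSup hh.2 x

lemma bddAbove_norm (hβ : 0 ≤ β) (hμ : 0 ≤ μ) (hh : MemE β μ h) :
    BddAbove (Set.range fun x => ‖h x‖) := by
  refine ⟨Enorm β μ h, ?_⟩
  rintro _ ⟨x, rfl⟩
  exact (le_mul_of_one_le_left (norm_nonneg _) (one_le_polyExpWeight hβ hμ x)).trans
    (hh.polyExpWeight_mul_norm_le x)

lemma integrable (hβ : 0 ≤ β) (hμ : 1 < μ) (hh : MemE β μ h) : Integrable h := by
  refine ((integrable_one_add_abs_rpow_neg hμ).const_mul (Enorm β μ h)).mono'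
    hh.1.aestronglyMeasurable (Filter.Eventually.of_forall fun t => ?_)
  have hpos : 0 < (1 + |t|) ^ μ := by positivity
  have hle : (1 + |t|) ^ μ * ‖h t‖ ≤ Enorm β μ h :=
    (mul_le_mul_of_nonneg_right
      (le_mul_of_one_le_right hpos.le (Real.one_le_exp (by positivity))) (norm_nonneg _)).trans
      (hh.polyExpWeight_mul_norm_le t)
  rw [Real.rpow_neg (by positivity), ← div_eq_mul_inv, le_div_iff₀ hpos, mul_comm]
  exact hle

lemma continuous_convolution (hβ : 0 ≤ β) (hμ : 1 < μ) (hf : MemE β μ f) (hg : MemE β μ g) :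
    Continuous (f ⋆[ContinuousLinearMap.mul ℂ ℂ, volume] g) :=
  (hf.bddAbove_norm hβ (by linarith)).continuous_convolution_left_of_integrable _ hf.1
    (hg.integrable hβ hμ)

lemma polyExpWeight_mul_norm_mul_le (hβ : 0 ≤ β) (hμ : 1 ≤ μ) (hf : MemE β μ f)
    (hg : MemE β μ g) (m t : ℝ) :
    polyExpWeight β μ m * ‖f (m - t) * g t‖ ≤
      2 ^ (μ - 1) * ((1 + |t|) ^ (-μ) + (1 + |m - t|) ^ (-μ)) * (Enorm β μ f * Enorm β μ g) :=
  calc polyExpWeight β μ m * ‖f (m - t) * g t‖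
      ≤ 2 ^ (μ - 1) * ((1 + |t|) ^ (-μ) + (1 + |m - t|) ^ (-μ)) *
          (polyExpWeight β μ (m - t) * polyExpWeight β μ t) * ‖f (m - t) * g t‖ :=
        mul_le_mul_of_nonneg_right (polyExpWeight_le hβ hμ m t) (norm_nonneg _)
    _ = 2 ^ (μ - 1) * ((1 + |t|) ^ (-μ) + (1 + |m - t|) ^ (-μ)) *
          ((polyExpWeight β μ (m - t) * ‖f (m - t)‖) * (polyExpWeight β μ t * ‖g t‖)) := by
        rw [norm_mul]; ring
    _ ≤ _ := by
        refine mul_le_mul_of_nonneg_left ?_ (by positivity)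
        exact mul_le_mul (hf.polyExpWeight_mul_norm_le _) (hg.polyExpWeight_mul_norm_le _)
          (mul_nonneg (polyExpWeight_pos β μ t).le (norm_nonneg _)) (Enorm_nonneg β μ f)

lemma Eweight_convolution_le (hβ : 0 ≤ β) (hμ : 1 < μ) (hf : MemE β μ f) (hg : MemE β μ g)
    (m : ℝ) :
    Eweight β μ (f ⋆[ContinuousLinearMap.mul ℂ ℂ, volume] g) m ≤
      2 ^ μ * (∫ t : ℝ, (1 + |t|) ^ (-μ)) * (Enorm β μ f * Enorm β μ g) := by
  set k : ℝ → ℝ := fun t => (1 + |t|) ^ (-μ)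
  have hk : Integrable k := integrable_one_add_abs_rpow_neg hμ
  have hw := polyExpWeight_pos β μ m
  set K := (polyExpWeight β μ m)⁻¹ * (2 ^ (μ - 1) * (Enorm β μ f * Enorm β μ g))
  have hpt : ∀ t, ‖f (m - t) * g t‖ ≤ K * (k t + k (m - t)) := fun t => by
    have := hf.polyExpWeight_mul_norm_mul_le hβ hμ.le hg m t
    rw [← le_div_iff₀' hw] at this
    exact this.trans_eq (by simp only [K, k]; ring)
  have hint : ∫ t, K * (k t + k (m - t)) = K * (2 * ∫ t, k t) := by
    rw [integral_const_mul, integral_add hk (hk.comp_sub_left m),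
      integral_sub_left_eq_self k volume m, two_mul]
  have hnorm : ‖∫ t, f (m - t) * g t‖ ≤ K * (2 * ∫ t, k t) :=
    hint ▸ norm_integral_le_of_norm_le ((hk.add (hk.comp_sub_left m)).const_mul K)
      (Filter.Eventually.of_forall hpt)
  rw [Eweight_eq, convolution_mul_swap]
  calc polyExpWeight β μ m * ‖∫ t, f (m - t) * g t‖
      ≤ polyExpWeight β μ m * (K * (2 * ∫ t, k t)) := by gcongr
    _ = 2 ^ μ * (∫ t, k t) * (Enorm β μ f * Enorm β μ g) := by
        simp only [K]
        rw [Real.rpow_sub_one two_ne_zero]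
        field_simp

end MemE

/-- For `β > 0`, `μ > 1`, the map `(f,g) ↦ (2π)^{-1/2} f ∗ g` is a continuous bilinear map
from `E_{(β,μ)} × E_{(β,μ)}` to `E_{(β,μ)}`: the convolution belongs to the space and
`‖(2π)^{-1/2} f ∗ g‖_{(β,μ)} ≤ C ‖f‖_{(β,μ)} ‖g‖_{(β,μ)}`. -/
theorem stmt4 (β μ : ℝ) (hβ : 0 < β) (hμ : 1 < μ) :
    ∃ C : ℝ, 0 < C ∧
      ∀ f g : ℝ → ℂ, MemE β μ f → MemE β μ g →
        MemE β μ (fun m => (1 / Real.sqrt (2 * Real.pi)) * ∫ m₁ : ℝ, f (m - m₁) * g m₁) ∧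
        Enorm β μ (fun m => (1 / Real.sqrt (2 * Real.pi)) * ∫ m₁ : ℝ, f (m - m₁) * g m₁)
          ≤ C * Enorm β μ f * Enorm β μ g := by
  set c : ℂ := 1 / Real.sqrt (2 * Real.pi)
  have hc : c ≠ 0 := one_div_ne_zero (ofReal_ne_zero.mpr (Real.sqrt_pos.mpr (by positivity)).ne')
  set I := ∫ t : ℝ, (1 + |t|) ^ (-μ)
  have hI : 0 < I := integral_one_add_abs_rpow_neg_pos hμ
  refine ⟨‖c‖ * (2 ^ μ * I), by positivity, fun f g hf hg => ?_⟩
  have hconv : (fun m => c * ∫ m₁ : ℝ, f (m - m₁) * g m₁) =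
      fun m => c * (f ⋆[ContinuousLinearMap.mul ℂ ℂ, volume] g) m := by
    simp only [convolution_mul_swap]
  have hbound : ∀ m, Eweight β μ (fun m => c * (f ⋆[ContinuousLinearMap.mul ℂ ℂ, volume] g) m) m
      ≤ ‖c‖ * (2 ^ μ * I) * Enorm β μ f * Enorm β μ g := fun m => by
    rw [Eweight_const_mul]
    exact (mul_le_mul_of_nonneg_left (hf.Eweight_convolution_le hβ.le hμ hg m)
      (norm_nonneg c)).trans_eq (by ring)
  rw [hconv]
  exact ⟨memE_of_Eweight_le (continuous_const.mul (hf.continuous_convolution hβ.le hμ hg)) hbound,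
    Enorm_le_of_Eweight_le hbound⟩
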